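/- Let x1x2 be an edge in an edge-Δ-critical graph G with d(x1) < Δ and d(x2) < Δ, let z ∈ N(x1) \ {x2} and y ∈ N(x2) \ {x1, z}, and let φ ∈ C^Δ(G−x1x2) satisfy φ(x1z) ∈ φ̄(x2) and φ(x2y) ∈ φ̄(x1). Then the set {x1, x2, y, z} is elementary with respect to φ, i.e., the sets φ̄(x1), φ̄(x2), φ̄(y), φ̄(z) are pairwise disjoint. -/

import Mathlib

open SimpleGraph Finset
open scoped Classical

variable {V : Type*}

/-- A proper edge coloring of `G` using colors from `{1, …, k}`: every edge gets a color
in `{1, …, k}` and distinct edges sharing a vertex get different colors. -/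
def IsProperEdgeColoring (G : SimpleGraph V) (k : ℕ) (c : Sym2 V → ℕ) : Prop :=
  (∀ e ∈ G.edgeSet, c e ∈ Finset.Icc 1 k) ∧
  ∀ e ∈ G.edgeSet, ∀ f ∈ G.edgeSet, e ≠ f → (∃ v, v ∈ e ∧ v ∈ f) → c e ≠ c f

/-- The chromatic index of `G`: the least `k` such that `G` has a proper edge coloring
with `k` colors. -/
noncomputable def chromIndex (G : SimpleGraph V) : ℕ :=
  sInf {k | ∃ c, IsProperEdgeColoring G k c}

/-- `G` is edge-`Δ`-critical: `χ'(G) = Δ + 1` and every proper subgraph `H` satisfies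
`χ'(H) ≤ Δ`. -/
def IsEdgeCritical [Fintype V] (G : SimpleGraph V) : Prop :=
  chromIndex G = G.maxDegree + 1 ∧
  ∀ H : SimpleGraph V, H < G → chromIndex H ≤ G.maxDegree

/-- `σ_q(x, y)`: the number of neighbors of `y` other than `x` with degree at least `q`. -/
noncomputable def sigmaDeg [Fintype V] (G : SimpleGraph V) (q : ℝ) (x y : V) : ℕ :=
  (Finset.univ.filter fun z => G.Adj y z ∧ z ≠ x ∧ q ≤ (G.degree z : ℝ)).card

/-- `V_{≥ r}(G)`: the set of vertices of degree at least `r`. -/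
noncomputable def Vge [Fintype V] (G : SimpleGraph V) (r : ℝ) : Finset V :=
  Finset.univ.filter fun v => r ≤ (G.degree v : ℝ)

/-- The Bondy–Chvátal closure of `G`: the smallest supergraph of `G` in which any two
distinct nonadjacent vertices have degree sum less than `n`; equivalently, the graph
obtained from `G` by repeatedly joining nonadjacent pairs with degree sum at least `n`. -/
noncomputable def bcClosure [Fintype V] (G : SimpleGraph V) : SimpleGraph V :=
  sInf {H | G ≤ H ∧ ∀ u v : V, u ≠ v → ¬ H.Adj u v →
    H.degree u + H.degree v < Fintype.card V}

/-- The set of colors seen at `v`: colors appearing on edges of `G` incident with `v`. -/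
noncomputable def colorsAt [Fintype V] (G : SimpleGraph V) (c : Sym2 V → ℕ) (v : V) : Finset ℕ :=
  (Finset.univ.filter fun w => G.Adj v w).image fun w => c s(v, w)

/-- The set of colors of `{1, …, k}` missing at `v`. -/
noncomputable def missingAt [Fintype V] (G : SimpleGraph V) (k : ℕ) (c : Sym2 V → ℕ) (v : V) :
    Finset ℕ :=
  Finset.Icc 1 k \ colorsAt G c v

/-- A set `S` of vertices is elementary with respect to `c` if the sets of missing colors of
its members are pairwise disjoint. -/
def Elementary [Fintype V] (G : SimpleGraph V) (k : ℕ) (c : Sym2 V → ℕ) (S : Finset V) : Prop :=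
  (S : Set V).Pairwise fun u v => Disjoint (missingAt G k c u) (missingAt G k c v)

/-! Since `G` is not `Δ`-edge-colorable, no `Δ`-coloring of `G - uv` has a color missing at both
`u` and `v`. If `φ(uw)` is missing at `v`, recoloring `uv` with it moves the uncolored edge to
`uw`, so `φ̄(u)` and `φ̄(w)` are disjoint as well. If `α ∈ φ̄(u)` and `β` is missing at `v` (or at
such a `w`), swapping the `(α, β)`-Kempe chain at `u` would otherwise create a common missing
color, so this chain joins `u` to `v` (or `w`). Kempe chains are paths or cycles, so three
vertices each missing `α` or `β` never lie on one chain: this gives the pairs `{x1, y}` and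
`{x2, z}`. For `{y, z}`, a common missing color `δ` is moved to `x1` by the `(α, δ)`-swap at `x1`
for some `α ∈ φ̄(x1)` other than `φ(x2y)` (two colors are missing at `x1` as `d(x1) < Δ`),
reducing to the pair `{x1, y}`. -/

def EdgeColorable (G : SimpleGraph V) (k : ℕ) : Prop :=
  ∃ c, IsProperEdgeColoring G k c

lemma IsEdgeCritical.not_edgeColorable [Fintype V] {G : SimpleGraph V} (hG : IsEdgeCritical G) :
    ¬ EdgeColorable G G.maxDegree := fun ⟨c, hc⟩ => by
  have : chromIndex G ≤ G.maxDegree := Nat.sInf_le ⟨c, hc⟩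
  rw [hG.1] at this
  omega

section EdgeColoring

variable {H H' : SimpleGraph V} {k : ℕ} {c : Sym2 V → ℕ} {u v w x : V} {a : ℕ}

lemma IsProperEdgeColoring.ne_of_adj (hc : IsProperEdgeColoring H k c) (hw : H.Adj v w)
    (hx : H.Adj v x) (hwx : w ≠ x) : c s(v, w) ≠ c s(v, x) :=
  hc.2 _ hw _ hx (fun h => hwx (Sym2.congr_right.mp h))
    ⟨v, Sym2.mem_mk_left _ _, Sym2.mem_mk_left _ _⟩

lemma IsProperEdgeColoring.of_le (hc : IsProperEdgeColoring H k c) (h : H' ≤ H) :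
    IsProperEdgeColoring H' k c :=
  have hE := edgeSet_subset_edgeSet.mpr h
  ⟨fun e he => hc.1 e (hE he), fun e he f hf => hc.2 e (hE he) f (hE hf)⟩

lemma deleteEdges_adj_of_ne {G : SimpleGraph V} (huw : G.Adj u w) (hwv : w ≠ v) :
    (G.deleteEdges {s(u, v)}).Adj u w :=
  deleteEdges_adj.mpr ⟨huw, fun h => hwv (Sym2.congr_right.mp h)⟩

variable [Fintype V]

lemma mem_colorsAt : a ∈ colorsAt H c v ↔ ∃ w, H.Adj v w ∧ c s(v, w) = a := by
  simp [colorsAt]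

lemma mem_missingAt : a ∈ missingAt H k c v ↔ a ∈ Icc 1 k ∧ a ∉ colorsAt H c v := by
  simp [missingAt]

lemma mem_colorsAt_of_mem_edgeSet {e : Sym2 V} (he : e ∈ H.edgeSet) (hx : x ∈ e) :
    c e ∈ colorsAt H c x := by
  obtain ⟨y, rfl⟩ := Sym2.mem_iff_exists.mp hx
  exact mem_colorsAt.mpr ⟨y, he, rfl⟩

lemma colorsAt_mono (h : H' ≤ H) : colorsAt H' c v ⊆ colorsAt H c v := fun a ha => by
  obtain ⟨w, hw, rfl⟩ := mem_colorsAt.mp ha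
  exact mem_colorsAt.mpr ⟨w, h hw, rfl⟩

lemma IsProperEdgeColoring.update (hc : IsProperEdgeColoring H k c)
    (hH : H'.edgeSet \ {s(u, v)} ⊆ H.edgeSet) (ha : a ∈ Icc 1 k)
    (hu : a ∉ colorsAt H c u) (hv : a ∉ colorsAt H c v) :
    IsProperEdgeColoring H' k (Function.update c s(u, v) a) := by
  have key : ∀ f ∈ H'.edgeSet, f ≠ s(u, v) → ∀ x ∈ s(u, v), x ∈ f → c f ≠ a := by
    rintro f hf hfuv x hx hxf rfl
    have := mem_colorsAt_of_mem_edgeSet (c := c) (hH ⟨hf, hfuv⟩) hxf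
    rcases Sym2.mem_iff.mp hx with rfl | rfl
    exacts [hu this, hv this]
  refine ⟨fun e he => ?_, fun e he f hf hef ⟨x, hxe, hxf⟩ => ?_⟩
  · by_cases h : e = s(u, v)
    · rwa [h, Function.update_self]
    · rw [Function.update_of_ne h]
      exact hc.1 e (hH ⟨he, h⟩)
  · by_cases he' : e = s(u, v) <;> by_cases hf' : f = s(u, v)
    · exact absurd (he'.trans hf'.symm) hef
    · subst he'
      rw [Function.update_self, Function.update_of_ne hf']
      exact (key f hf hf' x hxe hxf).symm
    · subst hf'
      rw [Function.update_self, Function.update_of_ne he']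
      exact key e he he' x hxf hxe
    · rw [Function.update_of_ne he', Function.update_of_ne hf']
      exact hc.2 e (hH ⟨he, he'⟩) f (hH ⟨hf, hf'⟩) hef ⟨x, hxe, hxf⟩

lemma colorsAt_update_subset (hH : H'.edgeSet \ {s(u, v)} ⊆ H.edgeSet) (x : V) :
    colorsAt H' (Function.update c s(u, v) a) x ⊆ insert a (colorsAt H c x) := fun b hb => by
  obtain ⟨y, hy, rfl⟩ := mem_colorsAt.mp hb
  by_cases h : s(x, y) = s(u, v)
  · simp [h]
  · rw [Function.update_of_ne h]
    exact mem_insert_of_mem (mem_colorsAt.mpr ⟨y, hH ⟨hy, h⟩, rfl⟩)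

lemma le_card_missingAt : k - H.degree v ≤ #(missingAt H k c v) :=
  calc k - H.degree v ≤ #(Icc 1 k) - #(colorsAt H c v) := by
        have : #(colorsAt H c v) ≤ H.degree v := by
          rw [← card_neighborFinset_eq_degree, neighborFinset_eq_filter]
          exact card_image_le
        rw [Nat.card_Icc]
        omega
    _ ≤ #(missingAt H k c v) := le_card_sdiff _ _

lemma degree_deleteEdges_add_one {G : SimpleGraph V} (huv : G.Adj u v) :
    (G.deleteEdges {s(u, v)}).degree u + 1 = G.degree u := by
  have : (G.deleteEdges {s(u, v)}).neighborFinset u = (G.neighborFinset u).erase v := by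
    ext w
    simp only [mem_neighborFinset, deleteEdges_adj, Set.mem_singleton_iff, Sym2.congr_right,
      mem_erase, ne_eq]
    tauto
  rw [← card_neighborFinset_eq_degree, this, card_erase_add_one (by simpa using huv),
    card_neighborFinset_eq_degree]

lemma le_card_missingAt_deleteEdges {G : SimpleGraph V} (huv : G.Adj u v) :
    k + 1 - G.degree u ≤ #(missingAt (G.deleteEdges {s(u, v)}) k c u) := by
  have hcard : k - (G.deleteEdges {s(u, v)}).degree u ≤
      #(missingAt (G.deleteEdges {s(u, v)}) k c u) := by
    convert le_card_missingAt
  have := degree_deleteEdges_add_one huv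
  omega

end EdgeColoring

namespace SimpleGraph

variable {H : SimpleGraph V} {b c : V} {i : ℕ}

lemma Walk.adj_getVert_pred (p : H.Walk b c) (h0 : i ≠ 0) (hi : i ≤ p.length) :
    H.Adj (p.getVert i) (p.getVert (i - 1)) := by
  have := p.adj_getVert_succ (i := i - 1) (by omega)
  rw [Nat.sub_add_cancel (Nat.pos_of_ne_zero h0)] at this
  exact this.symm

lemma Walk.IsPath.getVert_pred_ne_succ {p : H.Walk b c} (hp : p.IsPath) (hi : i < p.length) :
    p.getVert (i - 1) ≠ p.getVert (i + 1) := fun h => by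
  have := hp.getVert_injOn (by simp only [Set.mem_ofPred_eq]; omega)
    (by simp only [Set.mem_ofPred_eq]; omega) h
  omega

variable [Finite V]

lemma Walk.IsPath.mem_support_of_adj (hdeg : ∀ v, (H.neighborSet v).ncard ≤ 2)
    {p : H.Walk b c} (hp : p.IsPath) (hbc : b ≠ c) (hb : (H.neighborSet b).ncard ≤ 1)
    (hc : (H.neighborSet c).ncard ≤ 1) {x y : V} (hx : x ∈ p.support) (hxy : H.Adj x y) :
    y ∈ p.support := by
  obtain ⟨i, rfl, hi⟩ := Walk.mem_support_iff_exists_getVert.mp hx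
  have hlen : p.length ≠ 0 := fun h => hbc (Walk.eq_of_length_eq_zero h)
  suffices ∃ j, y = p.getVert j by
    obtain ⟨j, rfl⟩ := this
    exact p.getVert_mem_support j
  by_cases h0 : i = 0
  · subst h0
    rw [Walk.getVert_zero] at hxy
    exact ⟨1, ((Set.ncard_le_one (Set.toFinite _)).mp hb) y hxy _
      (by simpa using p.adj_getVert_succ (i := 0) (by omega))⟩
  by_cases hl : i = p.length
  · subst hl
    rw [Walk.getVert_length] at hxy
    exact ⟨p.length - 1, ((Set.ncard_le_one (Set.toFinite _)).mp hc) y hxy _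
      (by simpa using p.adj_getVert_pred hlen le_rfl)⟩
  by_contra! hy
  refine (hdeg (p.getVert i)).not_gt ((Set.two_lt_ncard_iff).mpr ⟨y, _, _, hxy,
    p.adj_getVert_pred h0 hi, p.adj_getVert_succ (by omega), hy _, hy _,
    hp.getVert_pred_ne_succ (by omega)⟩)

/-- A connected graph of maximum degree two is a path or a cycle, so it has at most two
leaves. -/
lemma not_reachable_of_leaves (hdeg : ∀ v, (H.neighborSet v).ncard ≤ 2) {a : V}
    (hab : a ≠ b) (hac : a ≠ c) (hbc : b ≠ c) (ha : (H.neighborSet a).ncard ≤ 1)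
    (hb : (H.neighborSet b).ncard ≤ 1) (hc : (H.neighborSet c).ncard ≤ 1)
    (hr : H.Reachable a b) : ¬ H.Reachable a c := fun hr' => by
  obtain ⟨p, hp⟩ := (hr.symm.trans hr').exists_isPath
  have hclosed : ∀ {x y : V} (q : H.Walk x y), x ∈ p.support → y ∈ p.support := by
    intro x y q
    induction q with
    | nil => exact id
    | cons h _ ih => exact fun hx => ih (hp.mem_support_of_adj hdeg hbc hb hc hx h)
  obtain ⟨i, rfl, hi⟩ := Walk.mem_support_iff_exists_getVert.mp
    (hclosed hr.some.reverse p.start_mem_support)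
  have h0 : i ≠ 0 := by
    rintro rfl
    exact hab (Walk.getVert_zero p)
  have hl : i ≠ p.length := by
    rintro rfl
    exact hac (Walk.getVert_length p)
  exact ha.not_gt ((Set.one_lt_ncard_iff).mpr ⟨_, _, p.adj_getVert_pred h0 hi,
    p.adj_getVert_succ (by omega), hp.getVert_pred_ne_succ (by omega)⟩)

end SimpleGraph

def kempeGraph (H : SimpleGraph V) (c : Sym2 V → ℕ) (α β : ℕ) : SimpleGraph V where
  Adj x y := H.Adj x y ∧ (c s(x, y) = α ∨ c s(x, y) = β)
  symm := ⟨fun x y h => ⟨h.1.symm, by rw [Sym2.eq_swap]; exact h.2⟩⟩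
  loopless := ⟨fun x h => H.loopless.irrefl x h.1⟩

/-- Edges of other colors are fixed by `Equiv.swap α β`, so only the `(α, β)`-chain through `u`
is recolored. -/
noncomputable def kempeSwap (H : SimpleGraph V) (c : Sym2 V → ℕ) (α β : ℕ) (u : V) :
    Sym2 V → ℕ := fun e =>
  if ∃ x ∈ e, (kempeGraph H c α β).Reachable u x then Equiv.swap α β (c e) else c e

section Kempe

variable {H : SimpleGraph V} {k : ℕ} {c : Sym2 V → ℕ} {α β a : ℕ} {u v w x : V}

lemma kempeSwap_of_ne {e : Sym2 V} (hα : c e ≠ α) (hβ : c e ≠ β) :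
    kempeSwap H c α β u e = c e := by
  simp [kempeSwap, Equiv.swap_apply_of_ne_of_ne hα hβ]

lemma kempeSwap_mk (hvw : H.Adj v w) :
    kempeSwap H c α β u s(v, w) = if (kempeGraph H c α β).Reachable u v
      then Equiv.swap α β (c s(v, w)) else c s(v, w) := by
  by_cases hcol : c s(v, w) = α ∨ c s(v, w) = β
  · have hvw' : (kempeGraph H c α β).Adj v w := ⟨hvw, hcol⟩
    have : (kempeGraph H c α β).Reachable u w ↔ (kempeGraph H c α β).Reachable u v :=
      ⟨fun h => h.trans hvw'.symm.reachable, fun h => h.trans hvw'.reachable⟩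
    simp [kempeSwap, this]
  · obtain ⟨hα, hβ⟩ := not_or.mp hcol
    rw [kempeSwap_of_ne hα hβ, Equiv.swap_apply_of_ne_of_ne hα hβ, ite_self]

lemma IsProperEdgeColoring.kempeSwap (hc : IsProperEdgeColoring H k c) (hα : α ∈ Icc 1 k)
    (hβ : β ∈ Icc 1 k) (u : V) : IsProperEdgeColoring H k (kempeSwap H c α β u) := by
  refine ⟨fun e he => ?_, fun e he f hf hef ⟨x, hxe, hxf⟩ => ?_⟩
  · induction e using Sym2.ind with
    | h v w =>
      rw [kempeSwap_mk he]
      split_ifs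
      · rw [Equiv.swap_apply_def]
        split_ifs
        exacts [hβ, hα, hc.1 _ he]
      · exact hc.1 _ he
  · obtain ⟨w, rfl⟩ := Sym2.mem_iff_exists.mp hxe
    obtain ⟨w', rfl⟩ := Sym2.mem_iff_exists.mp hxf
    have hne : c s(x, w) ≠ c s(x, w') := hc.ne_of_adj he hf fun h => hef (by rw [h])
    rw [kempeSwap_mk he, kempeSwap_mk hf]
    split_ifs
    exacts [(Equiv.injective _).ne hne, hne]

variable [Fintype V]

lemma ncard_neighborSet_kempeGraph_le (hc : IsProperEdgeColoring H k c) (v : V) :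
    ((kempeGraph H c α β).neighborSet v).ncard ≤ #({α, β} ∩ colorsAt H c v) := by
  rw [← Set.ncard_coe_finset]
  refine Set.ncard_le_ncard_of_injOn (fun w => c s(v, w)) ?_ ?_
  · rintro w ⟨hw, hcol⟩
    simpa [mem_colorsAt, hcol] using ⟨w, hw, rfl⟩
  · intro w₁ h₁ w₂ h₂ h
    by_contra hne
    exact hc.ne_of_adj h₁.1 h₂.1 hne h

lemma ncard_neighborSet_kempeGraph_le_two (hc : IsProperEdgeColoring H k c)
    (v : V) : ((kempeGraph H c α β).neighborSet v).ncard ≤ 2 :=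
  (ncard_neighborSet_kempeGraph_le hc v).trans ((card_le_card inter_subset_left).trans card_le_two)

lemma ncard_neighborSet_kempeGraph_le_one (hc : IsProperEdgeColoring H k c)
    (ha : a ∈ missingAt H k c v) (haαβ : a = α ∨ a = β) :
    ((kempeGraph H c α β).neighborSet v).ncard ≤ 1 := by
  refine (ncard_neighborSet_kempeGraph_le hc v).trans ?_
  calc #({α, β} ∩ colorsAt H c v) ≤ #(({α, β} : Finset ℕ).erase a) :=
        card_le_card fun b hb => mem_erase.mpr
          ⟨fun h => (mem_missingAt.mp ha).2 (h ▸ (mem_inter.mp hb).2), (mem_inter.mp hb).1⟩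
    _ ≤ 1 := by
        rw [card_erase_of_mem (by rcases haαβ with rfl | rfl <;> simp)]
        have := card_le_two (a := α) (b := β)
        omega

lemma colorsAt_kempeSwap : colorsAt H (kempeSwap H c α β u) v =
    if (kempeGraph H c α β).Reachable u v then (colorsAt H c v).image (Equiv.swap α β)
    else colorsAt H c v := by
  unfold colorsAt
  split_ifs with h
  · rw [image_image]
    exact image_congr fun w hw => by simp [kempeSwap_mk (mem_filter.mp hw).2, h]
  · exact image_congr fun w hw => by simp [kempeSwap_mk (mem_filter.mp hw).2, h]

lemma mem_missingAt_kempeSwap_self (hα : α ∈ missingAt H k c u) (hβ : β ∈ Icc 1 k) :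
    β ∈ missingAt H k (kempeSwap H c α β u) u := by
  rw [mem_missingAt, colorsAt_kempeSwap, if_pos (Reachable.refl u)]
  simpa [Equiv.swap_apply_eq_iff, hβ] using (mem_missingAt.mp hα).2

lemma missingAt_kempeSwap_of_not_reachable (h : ¬ (kempeGraph H c α β).Reachable u x) :
    missingAt H k (kempeSwap H c α β u) x = missingAt H k c x := by
  rw [missingAt, colorsAt_kempeSwap, if_neg h, missingAt]

lemma mem_missingAt_kempeSwap_of_ne (hα : a ≠ α) (hβ : a ≠ β) :
    a ∈ missingAt H k (kempeSwap H c α β u) x ↔ a ∈ missingAt H k c x := by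
  rw [mem_missingAt, mem_missingAt, colorsAt_kempeSwap]
  split_ifs
  · simp [Equiv.swap_apply_eq_iff, Equiv.swap_apply_of_ne_of_ne hα hβ]
  · rfl

end Kempe

section Critical

variable [Fintype V] {G : SimpleGraph V} {k : ℕ} {c : Sym2 V → ℕ} {α β : ℕ} {u v w x : V}

lemma disjoint_missingAt_of_not_edgeColorable (hG : ¬ EdgeColorable G k)
    (hc : IsProperEdgeColoring (G.deleteEdges {s(u, v)}) k c) :
    Disjoint (missingAt (G.deleteEdges {s(u, v)}) k c u)
      (missingAt (G.deleteEdges {s(u, v)}) k c v) :=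
  disjoint_left.mpr fun _ hau hav => hG ⟨_, hc.update (by rw [edgeSet_deleteEdges])
    (mem_missingAt.mp hau).1 (mem_missingAt.mp hau).2 (mem_missingAt.mp hav).2⟩

lemma IsProperEdgeColoring.shift (hc : IsProperEdgeColoring (G.deleteEdges {s(u, v)}) k c)
    (huw : G.Adj u w) (hwv : w ≠ v)
    (hμ : c s(u, w) ∈ missingAt (G.deleteEdges {s(u, v)}) k c v) :
    IsProperEdgeColoring (G.deleteEdges {s(u, w)}) k
      (Function.update c s(u, v) (c s(u, w))) := by
  have huw' := deleteEdges_adj_of_ne huw hwv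
  have hμu : c s(u, w) ∉ colorsAt ((G.deleteEdges {s(u, v)}).deleteEdges {s(u, w)}) c u := by
    intro h
    obtain ⟨y, hy, hcy⟩ := mem_colorsAt.mp h
    obtain ⟨hy', hyw⟩ := deleteEdges_adj.mp hy
    exact hc.ne_of_adj hy' huw' (fun h => hyw (by rw [h]; rfl)) hcy
  have hμv : c s(u, w) ∉ colorsAt ((G.deleteEdges {s(u, v)}).deleteEdges {s(u, w)}) c v :=
    fun h => (mem_missingAt.mp hμ).2 (colorsAt_mono (deleteEdges_le _) h)
  refine (hc.of_le (deleteEdges_le _)).update ?_ (hc.1 _ huw') hμu hμv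
  rw [deleteEdges_deleteEdges, edgeSet_deleteEdges, edgeSet_deleteEdges, Set.sdiff_sdiff,
    Set.union_comm]

lemma mem_missingAt_shift {a : ℕ}
    (ha : a ∈ missingAt (G.deleteEdges {s(u, v)}) k c x) (haμ : a ≠ c s(u, w)) :
    a ∈ missingAt (G.deleteEdges {s(u, w)}) k (Function.update c s(u, v) (c s(u, w))) x := by
  have hE : (G.deleteEdges {s(u, w)}).edgeSet \ {s(u, v)} ⊆
      (G.deleteEdges {s(u, v)}).edgeSet := by
    rw [edgeSet_deleteEdges, edgeSet_deleteEdges, sdiff_right_comm]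
    exact Set.sdiff_subset
  refine mem_missingAt.mpr ⟨(mem_missingAt.mp ha).1, fun h => ?_⟩
  rcases mem_insert.mp (colorsAt_update_subset hE x h) with h | h
  exacts [haμ h, (mem_missingAt.mp ha).2 h]

lemma disjoint_missingAt_of_shift (hG : ¬ EdgeColorable G k)
    (hc : IsProperEdgeColoring (G.deleteEdges {s(u, v)}) k c) (huw : G.Adj u w) (hwv : w ≠ v)
    (hμ : c s(u, w) ∈ missingAt (G.deleteEdges {s(u, v)}) k c v) :
    Disjoint (missingAt (G.deleteEdges {s(u, v)}) k c u)
      (missingAt (G.deleteEdges {s(u, v)}) k c w) := by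
  refine disjoint_left.mpr fun a hau haw => ?_
  have haμ : a ≠ c s(u, w) := fun h => (mem_missingAt.mp hau).2
    (h ▸ mem_colorsAt.mpr ⟨w, deleteEdges_adj_of_ne huw hwv, rfl⟩)
  exact disjoint_left.mp (disjoint_missingAt_of_not_edgeColorable hG (hc.shift huw hwv hμ))
    (mem_missingAt_shift hau haμ) (mem_missingAt_shift haw haμ)

lemma reachable_kempeGraph_of_missingAt (hG : ¬ EdgeColorable G k)
    (hc : IsProperEdgeColoring (G.deleteEdges {s(u, v)}) k c)
    (hα : α ∈ missingAt (G.deleteEdges {s(u, v)}) k c u)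
    (hβ : β ∈ missingAt (G.deleteEdges {s(u, v)}) k c v) :
    (kempeGraph (G.deleteEdges {s(u, v)}) c α β).Reachable u v := by
  by_contra h
  have hβ' := (mem_missingAt.mp hβ).1
  exact disjoint_left.mp (disjoint_missingAt_of_not_edgeColorable hG
      (hc.kempeSwap (mem_missingAt.mp hα).1 hβ' u))
    (mem_missingAt_kempeSwap_self hα hβ')
    (by rwa [missingAt_kempeSwap_of_not_reachable h])

lemma reachable_kempeGraph_of_shift (hG : ¬ EdgeColorable G k)
    (hc : IsProperEdgeColoring (G.deleteEdges {s(u, v)}) k c) (huw : G.Adj u w) (hwv : w ≠ v)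
    (hμ : c s(u, w) ∈ missingAt (G.deleteEdges {s(u, v)}) k c v)
    (hα : α ∈ missingAt (G.deleteEdges {s(u, v)}) k c u)
    (hβ : β ∈ missingAt (G.deleteEdges {s(u, v)}) k c w) :
    (kempeGraph (G.deleteEdges {s(u, v)}) c α β).Reachable u w := by
  by_contra h
  have huw' := deleteEdges_adj_of_ne huw hwv
  have hμα : c s(u, w) ≠ α := fun h => (mem_missingAt.mp hα).2
    (h ▸ mem_colorsAt.mpr ⟨w, huw', rfl⟩)
  have hμβ : c s(u, w) ≠ β := fun h => (mem_missingAt.mp hβ).2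
    (h ▸ mem_colorsAt.mpr ⟨u, huw'.symm, by rw [Sym2.eq_swap]⟩)
  have hβ' := (mem_missingAt.mp hβ).1
  have hμ' : kempeSwap (G.deleteEdges {s(u, v)}) c α β u s(u, w) ∈
      missingAt (G.deleteEdges {s(u, v)}) k (kempeSwap (G.deleteEdges {s(u, v)}) c α β u) v := by
    rwa [kempeSwap_of_ne hμα hμβ, mem_missingAt_kempeSwap_of_ne hμα hμβ]
  exact disjoint_left.mp (disjoint_missingAt_of_shift hG
      (hc.kempeSwap (mem_missingAt.mp hα).1 hβ' u) huw hwv hμ')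
    (mem_missingAt_kempeSwap_self hα hβ')
    (by rwa [missingAt_kempeSwap_of_not_reachable h])

/-- For a color `β` missing at `u` and `δ` missing at both `v` and `w`, the vertices `u`, `v`,
`w` would be three ends of the `(β, δ)`-chain through `u`. -/
lemma disjoint_missingAt_of_shift_of_degree_le (hG : ¬ EdgeColorable G k)
    (hc : IsProperEdgeColoring (G.deleteEdges {s(u, v)}) k c) (hu : G.degree u ≤ k)
    (huv : G.Adj u v) (huw : G.Adj u w) (hwv : w ≠ v)
    (hμ : c s(u, w) ∈ missingAt (G.deleteEdges {s(u, v)}) k c v) :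
    Disjoint (missingAt (G.deleteEdges {s(u, v)}) k c v)
      (missingAt (G.deleteEdges {s(u, v)}) k c w) := by
  refine disjoint_left.mpr fun δ hδv hδw => ?_
  obtain ⟨β, hβ⟩ : (missingAt (G.deleteEdges {s(u, v)}) k c u).Nonempty := by
    have := le_card_missingAt_deleteEdges (k := k) (c := c) huv
    exact card_pos.mp (by omega)
  exact not_reachable_of_leaves (ncard_neighborSet_kempeGraph_le_two hc) huv.ne huw.ne hwv.symm
    (ncard_neighborSet_kempeGraph_le_one hc hβ (Or.inl rfl))
    (ncard_neighborSet_kempeGraph_le_one hc hδv (Or.inr rfl))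
    (ncard_neighborSet_kempeGraph_le_one hc hδw (Or.inr rfl))
    (reachable_kempeGraph_of_missingAt hG hc hβ hδv)
    (reachable_kempeGraph_of_shift hG hc huw hwv hμ hβ hδw)

/-- With `τ = c(vx)` missing at `u`, a color `δ` missing at both `w` and `x` is moved to `u` by
swapping the `(α, δ)`-chain through `u` for some `α ≠ τ` missing at `u`; this chain avoids `x`
since it already ends at `u` and `w`. -/
lemma disjoint_missingAt_of_two_shifts (hG : ¬ EdgeColorable G k)
    (hc : IsProperEdgeColoring (G.deleteEdges {s(u, v)}) k c) (hu : G.degree u < k)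
    (hv : G.degree v ≤ k) (huv : G.Adj u v) (huw : G.Adj u w) (hwv : w ≠ v) (hvx : G.Adj v x)
    (hxu : x ≠ u) (hxw : x ≠ w) (hμ : c s(u, w) ∈ missingAt (G.deleteEdges {s(u, v)}) k c v)
    (hτ : c s(v, x) ∈ missingAt (G.deleteEdges {s(u, v)}) k c u) :
    Disjoint (missingAt (G.deleteEdges {s(u, v)}) k c x)
      (missingAt (G.deleteEdges {s(u, v)}) k c w) := by
  have leaves : ∀ {c'}, IsProperEdgeColoring (G.deleteEdges {s(u, v)}) k c' →
      c' s(v, x) ∈ missingAt (G.deleteEdges {s(u, v)}) k c' u →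
      Disjoint (missingAt (G.deleteEdges {s(u, v)}) k c' u)
        (missingAt (G.deleteEdges {s(u, v)}) k c' x) := fun hc' hτ' => by
    rw [Sym2.eq_swap (a := u) (b := v)] at hc' hτ' ⊢
    exact disjoint_missingAt_of_shift_of_degree_le hG hc' hv huv.symm hvx hxu hτ'
  refine disjoint_left.mpr fun δ hδx hδw => ?_
  obtain ⟨α, hα, hατ⟩ := exists_mem_ne (s := missingAt (G.deleteEdges {s(u, v)}) k c u)
    (by have := le_card_missingAt_deleteEdges (k := k) (c := c) huv; omega) (c s(v, x))
  have hxv : (G.deleteEdges {s(u, v)}).Adj x v :=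
    deleteEdges_adj.mpr ⟨hvx.symm, fun h => hxu (Sym2.congr_left.mp h)⟩
  have hτδ : c s(v, x) ≠ δ := fun h => (mem_missingAt.mp hδx).2
    (h ▸ mem_colorsAt.mpr ⟨v, hxv, by rw [Sym2.eq_swap]⟩)
  have hnreach : ¬ (kempeGraph (G.deleteEdges {s(u, v)}) c α δ).Reachable u x :=
    not_reachable_of_leaves (ncard_neighborSet_kempeGraph_le_two hc) huw.ne hxu.symm hxw.symm
      (ncard_neighborSet_kempeGraph_le_one hc hα (Or.inl rfl))
      (ncard_neighborSet_kempeGraph_le_one hc hδw (Or.inr rfl))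
      (ncard_neighborSet_kempeGraph_le_one hc hδx (Or.inr rfl))
      (reachable_kempeGraph_of_shift hG hc huw hwv hμ hα hδw)
  have hδ := (mem_missingAt.mp hδx).1
  refine disjoint_left.mp (leaves (hc.kempeSwap (mem_missingAt.mp hα).1 hδ u) ?_)
    (mem_missingAt_kempeSwap_self hα hδ) (by rwa [missingAt_kempeSwap_of_not_reachable hnreach])
  rwa [kempeSwap_of_ne hατ.symm hτδ, mem_missingAt_kempeSwap_of_ne hατ.symm hτδ]

end Critical

theorem statement11_general [Fintype V] (G : SimpleGraph V) (hG : IsEdgeCritical G)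
    (x1 x2 z y : V) (h12 : G.Adj x1 x2)
    (hd1 : G.degree x1 < G.maxDegree)
    (hz : G.Adj x1 z) (hz2 : z ≠ x2)
    (hy : G.Adj x2 y) (hy1 : y ≠ x1) (hyz : y ≠ z)
    (c : Sym2 V → ℕ)
    (hc : IsProperEdgeColoring (G.deleteEdges {s(x1, x2)}) G.maxDegree c)
    (hf1 : c s(x1, z) ∈ missingAt (G.deleteEdges {s(x1, x2)}) G.maxDegree c x2)
    (hf2 : c s(x2, y) ∈ missingAt (G.deleteEdges {s(x1, x2)}) G.maxDegree c x1) :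
    Elementary (G.deleteEdges {s(x1, x2)}) G.maxDegree c {x1, x2, y, z} := by
  have hG' := hG.not_edgeColorable
  have D12 := disjoint_missingAt_of_not_edgeColorable hG' hc
  have D1z := disjoint_missingAt_of_shift hG' hc hz hz2 hf1
  have D2z := disjoint_missingAt_of_shift_of_degree_le hG' hc (G.degree_le_maxDegree x1) h12 hz
    hz2 hf1
  have Dyz := disjoint_missingAt_of_two_shifts hG' hc hd1 (G.degree_le_maxDegree x2) h12 hz hz2
    hy hy1 hyz hf1 hf2
  rw [Sym2.eq_swap (a := x1) (b := x2)] at hc hf2 D12 D1z D2z Dyz ⊢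
  have D2y := disjoint_missingAt_of_shift hG' hc hy hy1 hf2
  have D1y := disjoint_missingAt_of_shift_of_degree_le hG' hc (G.degree_le_maxDegree x2) h12.symm
    hy hy1 hf2
  simp [Elementary, Set.pairwise_insert, D12, D12.symm, D1y, D1y.symm, D1z, D1z.symm, D2y,
    D2y.symm, D2z, D2z.symm, Dyz, Dyz.symm]

/-- If `x1x2` is an edge of an edge-`Δ`-critical graph `G` with `d(x1) < Δ` and `d(x2) < Δ`,
`z ∈ N(x1) \ {x2}`, `y ∈ N(x2) \ {x1, z}`, and `φ` is a proper edge-`Δ`-coloring of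
`G - x1x2` with `φ(x1z) ∈ φ̄(x2)` and `φ(x2y) ∈ φ̄(x1)`, then `{x1, x2, y, z}` is
elementary with respect to `φ`. -/
theorem statement11 [Fintype V] (G : SimpleGraph V) (hG : IsEdgeCritical G)
    (x1 x2 z y : V) (h12 : G.Adj x1 x2)
    (hd1 : G.degree x1 < G.maxDegree) (hd2 : G.degree x2 < G.maxDegree)
    (hz : G.Adj x1 z) (hz2 : z ≠ x2)
    (hy : G.Adj x2 y) (hy1 : y ≠ x1) (hyz : y ≠ z)
    (c : Sym2 V → ℕ)
    (hc : IsProperEdgeColoring (G.deleteEdges {s(x1, x2)}) G.maxDegree c)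
    (hf1 : c s(x1, z) ∈ missingAt (G.deleteEdges {s(x1, x2)}) G.maxDegree c x2)
    (hf2 : c s(x2, y) ∈ missingAt (G.deleteEdges {s(x1, x2)}) G.maxDegree c x1) :
    Elementary (G.deleteEdges {s(x1, x2)}) G.maxDegree c {x1, x2, y, z} :=
  statement11_general G hG x1 x2 z y h12 hd1 hz hz2 hy hy1 hyz c hc hf1 hf2
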